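/- arXiv:1301.5679 — 5 statements merged into one kernel-verified Lean document; each statement's English description precedes it below -/
import Mathlib

section
/- Let D, D′ ⊆ ℝ² be open, let f : D → ℝ³ be a C^{1M} regular immersion, and let N : D → ℝ³ be C¹ with ‖N‖ ≡ 1, ⟨N, f_x⟩ ≡ 0 and ⟨N, f_y⟩ ≡ 0. Let T : D′ → D be a C¹ diffeomorphism such that f̃ := f ∘ T is also C^{1M}, and set Ñ := N ∘ T. Define E = ⟨f_x,f_x⟩, F = ⟨f_x,f_y⟩, G = ⟨f_y,f_y⟩, ℓ = −⟨f_x,N_x⟩, m = −⟨f_x,N_y⟩, n = −⟨f_y,N_y⟩ and K = (ℓn − m²)/(EG − F²) on D, and define Ẽ, F̃, G̃, ℓ̃, m̃, ñ, K̃ analogously on D′ using f̃, Ñ and the coordinates (u,v) of D′. Then K̃ = K ∘ T on D′. -/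
/-! By the chain rule, `(f̃_u, f̃_v)` and `(Ñ_u, Ñ_v)` are the images of `(f_x, f_y)` and
`(N_x, N_y)` under the same matrix `J` (the transposed Jacobian of `T`), so the matrices of
the first and second fundamental forms both transform as `A ↦ J A Jᵀ` and their determinants
both pick up the factor `(det J)² ≠ 0`, which cancels in `K`. The one subtlety is that `K` reads
`m` off a single off-diagonal entry `-⟨f_x, N_y⟩`; the other one, `-⟨f_y, N_x⟩`, agrees with it
because differentiating `⟨N, f_x⟩ = 0` in `y` and `⟨N, f_y⟩ = 0` in `x` gives
`⟨f_x, N_y⟩ = -⟨N, f_xy⟩ = ⟨f_y, N_x⟩`. -/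

noncomputable section

open Real Set

abbrev E3 : Type := EuclideanSpace ℝ (Fin 3)

/-- Partial derivative in the `x`-direction. -/
noncomputable def pdx {E : Type*} [NormedAddCommGroup E] [NormedSpace ℝ E]
    (f : ℝ × ℝ → E) (p : ℝ × ℝ) : E := lineDeriv ℝ f p ((1 : ℝ), (0 : ℝ))

/-- Partial derivative in the `y`-direction. -/
noncomputable def pdy {E : Type*} [NormedAddCommGroup E] [NormedSpace ℝ E]
    (f : ℝ × ℝ → E) (p : ℝ × ℝ) : E := lineDeriv ℝ f p ((0 : ℝ), (1 : ℝ))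

/-- `f` is C¹ on `D`, and the mixed second partials `∂y∂x f` and `∂x∂y f`
exist at every point of `D`, are continuous on `D`, and agree on `D`. -/
def C1M {E : Type*} [NormedAddCommGroup E] [NormedSpace ℝ E]
    (D : Set (ℝ × ℝ)) (f : ℝ × ℝ → E) : Prop :=
  ContDiffOn ℝ 1 f D ∧
  (∀ p ∈ D, LineDifferentiableAt ℝ (pdx f) p ((0 : ℝ), (1 : ℝ))) ∧
  (∀ p ∈ D, LineDifferentiableAt ℝ (pdy f) p ((1 : ℝ), (0 : ℝ))) ∧
  ContinuousOn (pdy (pdx f)) D ∧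
  ContinuousOn (pdx (pdy f)) D ∧
  (∀ p ∈ D, pdy (pdx f) p = pdx (pdy f) p)

/-- The cross product on ℝ³. -/
noncomputable def cross3 (a b : E3) : E3 :=
  (WithLp.equiv 2 (Fin 3 → ℝ)).symm
    ![a 1 * b 2 - a 2 * b 1, a 2 * b 0 - a 0 * b 2, a 0 * b 1 - a 1 * b 0]

/-- The Euclidean inner product on ℝ³. -/
noncomputable def dot (a b : E3) : ℝ := inner ℝ a b

/-- `N : D → S²` is weakly harmonic: it is C^{1M}, weakly regular, takes values in the
unit sphere, and `N_xy = N_yx = h • N` for some scalar function `h`. -/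
def WeakHarmonic (D : Set (ℝ × ℝ)) (N : ℝ × ℝ → E3) : Prop :=
  C1M D N ∧ (∀ p ∈ D, ‖N p‖ = 1) ∧
  (∀ p ∈ D, pdx N p ≠ 0 ∧ pdy N p ≠ 0) ∧
  ∃ h : ℝ × ℝ → ℝ, ∀ p ∈ D, pdy (pdx N) p = h p • N p ∧ pdx (pdy N) p = h p • N p

/-- A weakly-regular C^{1M} ps-front with associated weakly harmonic map `N`. -/
def PsFront (D : Set (ℝ × ℝ)) (f N : ℝ × ℝ → E3) : Prop :=
  C1M D f ∧ (∀ p ∈ D, pdx f p ≠ 0 ∧ pdy f p ≠ 0) ∧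
  WeakHarmonic D N ∧
  ∀ p ∈ D, pdx f p = cross3 (N p) (pdx N p) ∧ pdy f p = -cross3 (N p) (pdy N p)


/-- The Gauss curvature `K = (ℓn − m²)/(EG − F²)` of a C^{1M} immersion with unit normal `N`. -/
noncomputable def Kof (f N : ℝ × ℝ → E3) (p : ℝ × ℝ) : ℝ :=
  ((-dot (pdx f p) (pdx N p)) * (-dot (pdy f p) (pdy N p)) -
      (-dot (pdx f p) (pdy N p)) ^ 2) /
    (dot (pdx f p) (pdx f p) * dot (pdy f p) (pdy f p) - dot (pdx f p) (pdy f p) ^ 2)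

open Topology Filter
open scoped RealInnerProductSpace

theorem LinearMap.det_prod_eq {R : Type*} [CommRing R] (L : R × R →ₗ[R] R × R) :
    LinearMap.det L = (L (1, 0)).1 * (L (0, 1)).2 - (L (0, 1)).1 * (L (1, 0)).2 := by
  rw [← LinearMap.det_toMatrix (Module.Basis.finTwoProd R), Matrix.det_fin_two]
  simp [LinearMap.toMatrix_apply]

theorem det_fderiv_ne_zero_of_leftInverse {E : Type*} [NormedAddCommGroup E] [NormedSpace ℝ E]
    [FiniteDimensional ℝ E] {T S : E → E} {p : E}
    (hT : DifferentiableAt ℝ T p) (hS : DifferentiableAt ℝ S (T p)) (hST : S ∘ T =ᶠ[𝓝 p] id) :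
    (fderiv ℝ T p).det ≠ 0 := by
  have h := hST.fderiv_eq (𝕜 := ℝ)
  rw [fderiv_comp p hS hT, fderiv_id] at h
  have h1 := congrArg ContinuousLinearMap.det h
  rw [ContinuousLinearMap.det, ContinuousLinearMap.toLinearMap_comp, LinearMap.det_comp,
    ContinuousLinearMap.det, ContinuousLinearMap.coe_id, LinearMap.det_id] at h1
  exact right_ne_zero_of_mul_eq_one h1

theorem lineDeriv_comp_eq_pdx_add_pdy {F : Type*} [NormedAddCommGroup F] [NormedSpace ℝ F]
    {T : ℝ × ℝ → ℝ × ℝ} {g : ℝ × ℝ → F} {p : ℝ × ℝ}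
    (hT : DifferentiableAt ℝ T p) (hg : DifferentiableAt ℝ g (T p)) (v : ℝ × ℝ) :
    lineDeriv ℝ (g ∘ T) p v
      = (fderiv ℝ T p v).1 • pdx g (T p) + (fderiv ℝ T p v).2 • pdy g (T p) := by
  have hv : fderiv ℝ T p v
      = (fderiv ℝ T p v).1 • ((1 : ℝ), (0 : ℝ)) + (fderiv ℝ T p v).2 • ((0 : ℝ), (1 : ℝ)) := by
    ext <;> simp
  rw [(hg.comp p hT).lineDeriv_eq_fderiv, fderiv_comp p hg hT, ContinuousLinearMap.comp_apply]
  conv_lhs => rw [hv]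
  rw [map_add, map_smul, map_smul, pdx, pdy, hg.lineDeriv_eq_fderiv, hg.lineDeriv_eq_fderiv]

theorem inner_lineDeriv_add_inner_lineDeriv_eq_zero {E F : Type*} [NormedAddCommGroup E]
    [NormedSpace ℝ E] [NormedAddCommGroup F] [InnerProductSpace ℝ F] {D : Set E} (hD : IsOpen D)
    {N g : E → F} {q v : E} (hq : q ∈ D)
    (hN : DifferentiableAt ℝ N q) (hg : LineDifferentiableAt ℝ g q v)
    (h0 : ∀ r ∈ D, ⟪N r, g r⟫ = 0) :
    ⟪N q, lineDeriv ℝ g q v⟫ + ⟪lineDeriv ℝ N q v, g q⟫ = 0 := by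
  have hprod : HasDerivAt (fun t : ℝ => ⟪N (q + t • v), g (q + t • v)⟫)
      (⟪N q, lineDeriv ℝ g q v⟫ + ⟪lineDeriv ℝ N q v, g q⟫) 0 := by
    simpa using (hN.lineDifferentiableAt (v := v)).hasLineDerivAt.inner ℝ hg.hasLineDerivAt
  have hline : Tendsto (fun t : ℝ => q + t • v) (𝓝 0) (𝓝 q) := by
    have hc : Continuous fun t : ℝ => q + t • v := by fun_prop
    simpa using hc.tendsto 0
  have hzero : (fun t : ℝ => ⟪N (q + t • v), g (q + t • v)⟫) =ᶠ[𝓝 0] fun _ => 0 :=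
    (hline.eventually_mem (hD.mem_nhds hq)).mono fun t ht => h0 _ ht
  exact hprod.unique ((hasDerivAt_const 0 0).congr_of_eventuallyEq hzero)

section InnerDet

variable {F : Type*} [NormedAddCommGroup F] [InnerProductSpace ℝ F]

def innerDet (u₁ u₂ w₁ w₂ : F) : ℝ := ⟪u₁, w₁⟫ * ⟪u₂, w₂⟫ - ⟪u₁, w₂⟫ * ⟪u₂, w₁⟫

theorem innerDet_smul_add (u₁ u₂ w₁ w₂ : F) (a b c d : ℝ) :
    innerDet (a • u₁ + c • u₂) (b • u₁ + d • u₂) (a • w₁ + c • w₂) (b • w₁ + d • w₂)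
      = (a * d - b * c) ^ 2 * innerDet u₁ u₂ w₁ w₂ := by
  simp only [innerDet, inner_add_left, inner_add_right, real_inner_smul_left,
    real_inner_smul_right]
  ring

theorem inner_smul_add_comm {u₁ u₂ w₁ w₂ : F} (h : ⟪u₁, w₂⟫ = ⟪u₂, w₁⟫) (a b c d : ℝ) :
    ⟪a • u₁ + c • u₂, b • w₁ + d • w₂⟫ = ⟪b • u₁ + d • u₂, a • w₁ + c • w₂⟫ := by
  simp only [inner_add_left, inner_add_right, real_inner_smul_left, real_inner_smul_right, h]
  ring

end InnerDet

theorem inner_pdx_pdy_comm_of_orthogonal {F : Type*} [NormedAddCommGroup F]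
    [InnerProductSpace ℝ F] {D : Set (ℝ × ℝ)} (hD : IsOpen D) {f N : ℝ × ℝ → F} (hf : C1M D f)
    {q : ℝ × ℝ} (hq : q ∈ D) (hN : DifferentiableAt ℝ N q)
    (hNfx : ∀ r ∈ D, ⟪N r, pdx f r⟫ = 0) (hNfy : ∀ r ∈ D, ⟪N r, pdy f r⟫ = 0) :
    ⟪pdx f q, pdy N q⟫ = ⟪pdy f q, pdx N q⟫ := by
  have hx := inner_lineDeriv_add_inner_lineDeriv_eq_zero hD hq hN (hf.2.1 q hq) hNfx
  have hy := inner_lineDeriv_add_inner_lineDeriv_eq_zero hD hq hN (hf.2.2.1 q hq) hNfy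
  change ⟪N q, pdy (pdx f) q⟫ + ⟪pdy N q, pdx f q⟫ = 0 at hx
  change ⟪N q, pdx (pdy f) q⟫ + ⟪pdx N q, pdy f q⟫ = 0 at hy
  rw [hf.2.2.2.2.2 q hq] at hx
  rw [real_inner_comm (pdy N q), real_inner_comm (pdx N q)]
  linarith

theorem Kof_eq_innerDet_div {f N : ℝ × ℝ → E3} {p : ℝ × ℝ}
    (hS : ⟪pdx f p, pdy N p⟫ = ⟪pdy f p, pdx N p⟫) :
    Kof f N p = innerDet (pdx f p) (pdy f p) (pdx N p) (pdy N p)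
      / innerDet (pdx f p) (pdy f p) (pdx f p) (pdy f p) := by
  simp only [Kof, dot, innerDet, real_inner_comm (pdx f p) (pdy f p)]
  rw [← hS]
  ring

theorem Kof_eq_of_linear_change {f N g M : ℝ × ℝ → E3} {p p' : ℝ × ℝ} {a b c d : ℝ}
    (hdet : a * d - b * c ≠ 0) (hS : ⟪pdx f p, pdy N p⟫ = ⟪pdy f p, pdx N p⟫)
    (hgx : pdx g p' = a • pdx f p + c • pdy f p) (hgy : pdy g p' = b • pdx f p + d • pdy f p)
    (hMx : pdx M p' = a • pdx N p + c • pdy N p) (hMy : pdy M p' = b • pdx N p + d • pdy N p) :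
    Kof g M p' = Kof f N p := by
  have hS' : ⟪pdx g p', pdy M p'⟫ = ⟪pdy g p', pdx M p'⟫ := by
    rw [hgx, hgy, hMx, hMy]
    exact inner_smul_add_comm hS a b c d
  rw [Kof_eq_innerDet_div hS, Kof_eq_innerDet_div hS', hgx, hgy, hMx, hMy, innerDet_smul_add,
    innerDet_smul_add, mul_div_mul_left _ _ (pow_ne_zero 2 hdet)]

theorem stmt_1_general (D D' : Set (ℝ × ℝ)) (hD : IsOpen D) (hD' : IsOpen D')
    (f N : ℝ × ℝ → E3)
    (hf : C1M D f)
    (hN : ContDiffOn ℝ 1 N D)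
    (hNfx : ∀ p ∈ D, dot (N p) (pdx f p) = 0)
    (hNfy : ∀ p ∈ D, dot (N p) (pdy f p) = 0)
    (T Tinv : ℝ × ℝ → ℝ × ℝ)
    (hT : ContDiffOn ℝ 1 T D') (hTinv : ContDiffOn ℝ 1 Tinv D)
    (hTbij : Set.BijOn T D' D)
    (hTl : ∀ p ∈ D', Tinv (T p) = p) :
    ∀ p ∈ D', Kof (f ∘ T) (N ∘ T) p = Kof f N (T p) := by
  intro p hp
  have hq : T p ∈ D := hTbij.mapsTo hp
  have hTd := (hT.differentiableOn one_ne_zero).differentiableAt (hD'.mem_nhds hp)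
  have hTinvd := (hTinv.differentiableOn one_ne_zero).differentiableAt (hD.mem_nhds hq)
  have hfd := (hf.1.differentiableOn one_ne_zero).differentiableAt (hD.mem_nhds hq)
  have hNd := (hN.differentiableOn one_ne_zero).differentiableAt (hD.mem_nhds hq)
  have hdet := det_fderiv_ne_zero_of_leftInverse hTd hTinvd
    (eventually_of_mem (hD'.mem_nhds hp) hTl)
  rw [ContinuousLinearMap.det, LinearMap.det_prod_eq] at hdet
  exact Kof_eq_of_linear_change hdet
    (inner_pdx_pdy_comm_of_orthogonal hD hf hq hNd hNfx hNfy)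
    (lineDeriv_comp_eq_pdx_add_pdy hTd hfd _) (lineDeriv_comp_eq_pdx_add_pdy hTd hfd _)
    (lineDeriv_comp_eq_pdx_add_pdy hTd hNd _) (lineDeriv_comp_eq_pdx_add_pdy hTd hNd _)

/-- The Gauss curvature of a regular C^{1M} immersion is invariant under a C¹ change of
coordinates `T` for which `f ∘ T` is again C^{1M}. -/
theorem stmt_1 (D D' : Set (ℝ × ℝ)) (hD : IsOpen D) (hD' : IsOpen D')
    (f N : ℝ × ℝ → E3)
    (hf : C1M D f)
    (hreg : ∀ p ∈ D, LinearIndependent ℝ ![pdx f p, pdy f p])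
    (hN : ContDiffOn ℝ 1 N D)
    (hNunit : ∀ p ∈ D, ‖N p‖ = 1)
    (hNfx : ∀ p ∈ D, dot (N p) (pdx f p) = 0)
    (hNfy : ∀ p ∈ D, dot (N p) (pdy f p) = 0)
    (T Tinv : ℝ × ℝ → ℝ × ℝ)
    (hT : ContDiffOn ℝ 1 T D') (hTinv : ContDiffOn ℝ 1 Tinv D)
    (hTbij : Set.BijOn T D' D)
    (hTl : ∀ p ∈ D', Tinv (T p) = p) (hTr : ∀ q ∈ D, T (Tinv q) = q)
    (hfT : C1M D' (f ∘ T)) :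
    ∀ p ∈ D', Kof (f ∘ T) (N ∘ T) p = Kof f N (T p) :=
  stmt_1_general D D' hD hD' f N hf hN hNfx hNfy T Tinv hT hTinv hTbij hTl

end
end

section
/- Let D = I × J be a product of open intervals in ℝ² and let N : D → ℝ³ be a weakly harmonic map into the unit sphere (i.e., N is C^{1M}, ‖N‖ ≡ 1, N_x(p) ≠ 0 and N_y(p) ≠ 0 for all p, and there is h : D → ℝ with N_xy = N_yx = h·N on D). Then there exists a C^{1M} map f : D → ℝ³ with f_x = N × N_x and f_y = −N × N_y on D; moreover f is weakly regular. Further, for ANY C¹ map f : D → ℝ³ satisfying f_x = N × N_x and f_y = −N × N_y (with N : D → S² merely C¹ satisfying ⟨N,N_x⟩ = ⟨N,N_y⟩ = 0) and any p ∈ D: f_x(p), f_y(p) are linearly independent if and only if N_x(p), N_y(p) are linearly independent; and (f_x(p) ≠ 0 and f_y(p) ≠ 0) if and only if (N_x(p) ≠ 0 and N_y(p) ≠ 0). -/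
noncomputable section

open Real Set

/-!
The 1-form `(N × N_x) dx - (N × N_y) dy` is closed: both of its mixed derivatives equal
`N_y × N_x`, because the remaining terms `N × N_xy` and `N × N_yx` vanish when
`N_xy = N_yx = h N`. On a rectangle a closed form with continuous coefficients and continuous
mixed derivatives has a primitive: integrate along the path `(x₀, y₀) → (x, y₀) → (x, y)` and
differentiate under the integral sign. The regularity statements are pointwise linear algebra:
for a unit vector `N`, Lagrange's identity makes `a ↦ N × a` an isometry of `N^⊥`, and `N_x`,
`N_y` lie in `N^⊥` because `‖N‖ = 1`.
-/

open Filter Topology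
open scoped Matrix

theorem cross3_eq_crossProduct (a b : E3) :
    cross3 a b = WithLp.toLp 2 (WithLp.ofLp a ⨯₃ WithLp.ofLp b) := rfl

theorem dot_eq_dotProduct (a b : E3) : dot a b = WithLp.ofLp a ⬝ᵥ WithLp.ofLp b := by
  simp [dot, EuclideanSpace.inner_eq_star_dotProduct, dotProduct_comm]

def cross3L : E3 →L[ℝ] E3 →L[ℝ] E3 :=
  LinearMap.toContinuousBilinearMap <| LinearMap.mk₂ ℝ cross3
    (fun a b c => by simp [cross3_eq_crossProduct]) (fun r a b => by simp [cross3_eq_crossProduct])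
    (fun a b c => by simp [cross3_eq_crossProduct]) (fun r a b => by simp [cross3_eq_crossProduct])

@[simp] theorem cross3L_apply (a b : E3) : cross3L a b = cross3 a b := rfl

theorem ContinuousOn.cross3 {X : Type*} [TopologicalSpace X] {a b : X → E3} {s : Set X}
    (ha : ContinuousOn a s) (hb : ContinuousOn b s) :
    ContinuousOn (fun x => cross3 (a x) (b x)) s :=
  (cross3L.continuous.comp_continuousOn ha).clm_apply hb

theorem cross3_smul_self (r : ℝ) (a : E3) : cross3 a (r • a) = 0 := by
  simp [cross3_eq_crossProduct]

theorem cross3_anticomm (a b : E3) : -cross3 a b = cross3 b a := by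
  rw [cross3_eq_crossProduct, cross3_eq_crossProduct, ← cross_anticomm, WithLp.toLp_neg, neg_neg]

theorem dot_self (a : E3) : dot a a = ‖a‖ ^ 2 := real_inner_self_eq_norm_sq a

theorem norm_cross3_sq (a b : E3) : ‖cross3 a b‖ ^ 2 = ‖a‖ ^ 2 * ‖b‖ ^ 2 - dot a b ^ 2 := by
  simp only [← dot_self, dot_eq_dotProduct, cross3_eq_crossProduct, cross_dot_cross,
    dotProduct_comm (WithLp.ofLp b) (WithLp.ofLp a)]
  ring

theorem norm_cross3_of_dot_eq_zero {n a : E3} (hn : ‖n‖ = 1) (ha : dot n a = 0) :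
    ‖cross3 n a‖ = ‖a‖ := by
  have := norm_cross3_sq n a
  rw [hn, ha] at this
  simpa using congrArg Real.sqrt this

theorem linearIndependent_cross3_pair_iff {n a b : E3} (hn : ‖n‖ = 1) (ha : dot n a = 0)
    (hb : dot n b = 0) :
    LinearIndependent ℝ ![cross3 n a, -cross3 n b] ↔ LinearIndependent ℝ ![a, b] := by
  have key (s t : ℝ) : s • cross3 n a + t • -cross3 n b = 0 ↔ s • a + (-t) • b = 0 := by
    have hc : dot n (s • a + (-t) • b) = 0 := by
      unfold dot at ha hb ⊢
      simp [inner_add_right, inner_smul_right, ha, hb]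
    rw [← norm_eq_zero, ← norm_eq_zero (a := s • a + _), ← norm_cross3_of_dot_eq_zero hn hc]
    simp [← cross3L_apply]
  simp only [LinearIndependent.pair_iff, key]
  constructor <;> intro h s t hst
  · simpa using h s (-t) (by simpa using hst)
  · simpa using h s (-t) hst

theorem cross3_ne_zero_iff {n a : E3} (hn : ‖n‖ = 1) (ha : dot n a = 0) :
    cross3 n a ≠ 0 ↔ a ≠ 0 := by
  rw [← norm_ne_zero_iff, norm_cross3_of_dot_eq_zero hn ha, norm_ne_zero_iff]

section Partials

variable {E : Type*} [NormedAddCommGroup E] [NormedSpace ℝ E]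

theorem hasLineDerivAt_one_zero_iff {f : ℝ × ℝ → E} {p : ℝ × ℝ} {v : E} :
    HasLineDerivAt ℝ f v p (1, 0) ↔ HasDerivAt (fun x => f (x, p.2)) v p.1 := by
  have hshift : (fun t : ℝ => f (p + t • (1, 0))) = fun t => f (p.1 + t, p.2) := by
    ext t; congr 1; ext <;> simp
  rw [HasLineDerivAt, hshift]
  refine ⟨fun h => ?_, fun h => ?_⟩
  · simpa using HasDerivAt.comp_sub_const (f := fun t => f (p.1 + t, p.2)) p.1 p.1 (by simpa)
  · exact HasDerivAt.comp_const_add p.1 0 (by simpa)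

theorem hasLineDerivAt_zero_one_iff {f : ℝ × ℝ → E} {p : ℝ × ℝ} {v : E} :
    HasLineDerivAt ℝ f v p (0, 1) ↔ HasDerivAt (fun y => f (p.1, y)) v p.2 := by
  have hshift : (fun t : ℝ => f (p + t • (0, 1))) = fun t => f (p.1, p.2 + t) := by
    ext t; congr 1; ext <;> simp
  rw [HasLineDerivAt, hshift]
  refine ⟨fun h => ?_, fun h => ?_⟩
  · simpa using HasDerivAt.comp_sub_const (f := fun t => f (p.1, p.2 + t)) p.2 p.2 (by simpa)
  · exact HasDerivAt.comp_const_add p.2 0 (by simpa)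

theorem HasLineDerivAt.cross3 {a b : E → E3} {p v : E} {a' b' : E3}
    (ha : HasLineDerivAt ℝ a a' p v) (hb : HasLineDerivAt ℝ b b' p v) :
    HasLineDerivAt ℝ (fun q => cross3 (a q) (b q)) (cross3 a' (b p) + cross3 (a p) b') p v := by
  unfold HasLineDerivAt at *
  simpa using (cross3L.hasFDerivAt.comp_hasDerivAt (0 : ℝ) ha).clm_apply hb

theorem HasLineDerivAt.neg {F : Type*} [NormedAddCommGroup F] [NormedSpace ℝ F] {f : E → F}
    {p v : E} {f' : F} (hf : HasLineDerivAt ℝ f f' p v) :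
    HasLineDerivAt ℝ (fun q => -f q) (-f') p v :=
  HasDerivAt.neg hf

theorem HasLineDerivAt.inner_eq_zero_of_eventually_norm_eq {F : Type*} [NormedAddCommGroup F]
    [InnerProductSpace ℝ F] {N : E → F} {p v : E} {n' : F} {c : ℝ}
    (hN : HasLineDerivAt ℝ N n' p v) (hc : ∀ᶠ q in 𝓝 p, ‖N q‖ = c) : inner ℝ (N p) n' = 0 := by
  have hline : Tendsto (fun t : ℝ => p + t • v) (𝓝 0) (𝓝 p) := by
    have : Continuous fun t : ℝ => p + t • v := by fun_prop
    simpa using this.tendsto 0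
  have hconst : (fun t : ℝ => ‖N (p + t • v)‖ ^ 2) =ᶠ[𝓝 0] fun _ => c ^ 2 :=
    (hline.eventually hc).mono fun t ht => by simp only [ht]
  have := (HasDerivAt.norm_sq hN).unique ((hasDerivAt_const 0 (c ^ 2)).congr_of_eventuallyEq hconst)
  simpa using this

theorem contDiffOn_one_of_hasLineDerivAt {f g₁ g₂ : ℝ × ℝ → E} {D : Set (ℝ × ℝ)}
    (hD : IsOpen D) (hf₁ : ∀ p ∈ D, HasLineDerivAt ℝ f (g₁ p) p (1, 0))
    (hf₂ : ∀ p ∈ D, HasLineDerivAt ℝ f (g₂ p) p (0, 1))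
    (hg₁ : ContinuousOn g₁ D) (hg₂ : ContinuousOn g₂ D) : ContDiffOn ℝ 1 f D := by
  set L : ℝ × ℝ → ℝ × ℝ →L[ℝ] E := fun p =>
    ((1 : ℝ →L[ℝ] ℝ).smulRight (g₁ p)).coprod ((1 : ℝ →L[ℝ] ℝ).smulRight (g₂ p))
  have hL : ∀ p ∈ D, HasFDerivAt f (L p) p := by
    intro p hp
    have hcont {g : ℝ × ℝ → E} (hg : ContinuousOn g D) :
        ContinuousAt (fun q => (1 : ℝ →L[ℝ] ℝ).smulRight (g q)) p :=
      (ContinuousLinearMap.smulRightL ℝ ℝ E 1).continuous.continuousAt.comp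
        (hg.continuousAt (hD.mem_nhds hp))
    refine (hasStrictFDerivAt_uncurry_coprod (f := fun x y => f (x, y))
      (f₁ := fun x y => (1 : ℝ →L[ℝ] ℝ).smulRight (g₁ (x, y)))
      (f₂ := fun x y => (1 : ℝ →L[ℝ] ℝ).smulRight (g₂ (x, y))) ?_ ?_ (hcont hg₁)
      (hcont hg₂)).hasFDerivAt
    · filter_upwards [hD.mem_nhds hp] with q hq
      exact (hasLineDerivAt_one_zero_iff.1 (hf₁ q hq)).hasFDerivAt
    · filter_upwards [hD.mem_nhds hp] with q hq
      exact (hasLineDerivAt_zero_one_iff.1 (hf₂ q hq)).hasFDerivAt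
  have hLcont : ContinuousOn L D := by
    refine continuousOn_clm_apply.2 fun z => ?_
    simp only [L, ContinuousLinearMap.coprod_apply, ContinuousLinearMap.smulRight_apply,
      one_apply_eq_self]
    exact (continuousOn_const.smul hg₁).add (continuousOn_const.smul hg₂)
  rw [show (1 : WithTop ℕ∞) = 0 + 1 from (zero_add 1).symm,
    contDiffOn_succ_iff_fderiv_of_isOpen hD]
  exact ⟨fun p hp => (hL p hp).differentiableAt.differentiableWithinAt, by simp,
    (contDiffOn_zero.2 hLcont).congr fun p hp => (hL p hp).fderiv⟩

theorem c1M_of_hasLineDerivAt {f g₁ g₂ G : ℝ × ℝ → E} {D : Set (ℝ × ℝ)}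
    (hD : IsOpen D) (hf₁ : ∀ p ∈ D, HasLineDerivAt ℝ f (g₁ p) p (1, 0))
    (hf₂ : ∀ p ∈ D, HasLineDerivAt ℝ f (g₂ p) p (0, 1))
    (hg₁ : ContinuousOn g₁ D) (hg₂ : ContinuousOn g₂ D) (hG : ContinuousOn G D)
    (hg₁₂ : ∀ p ∈ D, HasLineDerivAt ℝ g₁ (G p) p (0, 1))
    (hg₂₁ : ∀ p ∈ D, HasLineDerivAt ℝ g₂ (G p) p (1, 0)) : C1M D f := by
  have h₁₂ : ∀ p ∈ D, HasLineDerivAt ℝ (pdx f) (G p) p (0, 1) := fun p hp =>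
    (hg₁₂ p hp).congr_of_eventuallyEq <|
      eventually_of_mem (hD.mem_nhds hp) fun q hq => (hf₁ q hq).lineDeriv
  have h₂₁ : ∀ p ∈ D, HasLineDerivAt ℝ (pdy f) (G p) p (1, 0) := fun p hp =>
    (hg₂₁ p hp).congr_of_eventuallyEq <|
      eventually_of_mem (hD.mem_nhds hp) fun q hq => (hf₂ q hq).lineDeriv
  exact ⟨contDiffOn_one_of_hasLineDerivAt hD hf₁ hf₂ hg₁ hg₂,
    fun p hp => (h₁₂ p hp).lineDifferentiableAt, fun p hp => (h₂₁ p hp).lineDifferentiableAt,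
    hG.congr fun p hp => (h₁₂ p hp).lineDeriv, hG.congr fun p hp => (h₂₁ p hp).lineDeriv,
    fun p hp => (h₁₂ p hp).lineDeriv.trans (h₂₁ p hp).lineDeriv.symm⟩

end Partials

section ContDiffOn

variable {E F : Type*} [NormedAddCommGroup E] [NormedSpace ℝ E] [NormedAddCommGroup F]
  [NormedSpace ℝ F] {f : E → F} {D : Set E}

theorem ContDiffOn.hasLineDerivAt (hf : ContDiffOn ℝ 1 f D) (hD : IsOpen D) {p : E}
    (hp : p ∈ D) (v : E) : HasLineDerivAt ℝ f (lineDeriv ℝ f p v) p v :=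
  ((hf.differentiableOn one_ne_zero).differentiableAt (hD.mem_nhds hp)).lineDifferentiableAt
    |>.hasLineDerivAt

theorem ContDiffOn.continuousOn_lineDeriv (hf : ContDiffOn ℝ 1 f D) (hD : IsOpen D) (v : E) :
    ContinuousOn (fun p => lineDeriv ℝ f p v) D :=
  ((hf.continuousOn_fderiv_of_isOpen hD le_rfl).clm_apply continuousOn_const).congr fun _ hp =>
    ((hf.differentiableOn one_ne_zero).differentiableAt (hD.mem_nhds hp)).lineDeriv_eq_fderiv

theorem dot_lineDeriv_eq_zero_of_norm_eq_one {N : E → E3} (hN : ContDiffOn ℝ 1 N D)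
    (hD : IsOpen D) (hunit : ∀ p ∈ D, ‖N p‖ = 1) {p : E} (hp : p ∈ D) (v : E) :
    dot (N p) (lineDeriv ℝ N p v) = 0 :=
  (hN.hasLineDerivAt hD hp v).inner_eq_zero_of_eventually_norm_eq <|
    eventually_of_mem (hD.mem_nhds hp) hunit

end ContDiffOn

section RectanglePrimitive

open Set Metric MeasureTheory
open scoped Interval

variable {E : Type*} [NormedAddCommGroup E] [NormedSpace ℝ E] {I J : Set ℝ}

theorem hasDerivAt_intervalIntegral_of_hasLineDerivAt (hI : IsOpen I) (hJc : J.OrdConnected)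
    {g G : ℝ × ℝ → E} (hg : ContinuousOn g (I ×ˢ J)) (hG : ContinuousOn G (I ×ˢ J))
    (hgx : ∀ p ∈ I ×ˢ J, HasLineDerivAt ℝ g (G p) p (1, 0)) {x a b : ℝ} (hx : x ∈ I)
    (ha : a ∈ J) (hb : b ∈ J) :
    HasDerivAt (fun u => ∫ s in a..b, g (u, s)) (∫ s in a..b, G (x, s)) x := by
  obtain ⟨ε, hε, hball⟩ : ∃ ε > 0, closedBall x ε ⊆ I :=
    nhds_basis_closedBall.mem_iff.1 (hI.mem_nhds hx)
  have hK : closedBall x ε ×ˢ uIcc a b ⊆ I ×ˢ J := prod_mono hball (hJc.uIcc_subset ha hb)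
  obtain ⟨C, hC⟩ := ((isCompact_closedBall x ε).prod isCompact_uIcc).exists_bound_of_continuousOn
    (hG.mono hK)
  have hslice {k : ℝ × ℝ → E} (hk : ContinuousOn k (I ×ˢ J)) {u : ℝ} (hu : u ∈ closedBall x ε) :
      ContinuousOn (fun s => k (u, s)) [[a, b]] :=
    (hk.uncurry_left (f := Function.curry k) u (hball hu)).mono (hJc.uIcc_subset ha hb)
  have hx' : x ∈ closedBall x ε := mem_closedBall_self hε.le
  refine (intervalIntegral.hasDerivAt_integral_of_dominated_loc_of_deriv_le (bound := fun _ => C)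
    (F' := fun u s => G (u, s)) (ball_mem_nhds x hε) ?_ ?_ ?_ ?_ intervalIntegrable_const ?_).2
  · filter_upwards [ball_mem_nhds x hε] with u hu
    exact ((hslice hg (ball_subset_closedBall hu)).mono uIoc_subset_uIcc).aestronglyMeasurable
      measurableSet_uIoc
  · exact (hslice hg hx').intervalIntegrable
  · exact ((hslice hG hx').mono uIoc_subset_uIcc).aestronglyMeasurable measurableSet_uIoc
  · exact ae_of_all _ fun s hs u hu => hC (u, s) ⟨ball_subset_closedBall hu, uIoc_subset_uIcc hs⟩
  · exact ae_of_all _ fun s hs u hu => hasLineDerivAt_one_zero_iff.1 <|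
      hgx (u, s) (hK ⟨ball_subset_closedBall hu, uIoc_subset_uIcc hs⟩)

def rectPrimitive (g₁ g₂ : ℝ × ℝ → E) (x₀ y₀ : ℝ) (q : ℝ × ℝ) : E :=
  (∫ t in x₀..q.1, g₁ (t, y₀)) + ∫ s in y₀..q.2, g₂ (q.1, s)

variable [CompleteSpace E] {g₁ g₂ G : ℝ × ℝ → E} {x₀ y₀ : ℝ} {p : ℝ × ℝ}

theorem hasLineDerivAt_rectPrimitive_zero_one (hJ : IsOpen J) (hJc : J.OrdConnected)
    (hy₀ : y₀ ∈ J) (hg₂ : ContinuousOn g₂ (I ×ˢ J)) (hp : p ∈ I ×ˢ J) :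
    HasLineDerivAt ℝ (rectPrimitive g₁ g₂ x₀ y₀) (g₂ p) p (0, 1) := by
  have hcol : ContinuousOn (fun s => g₂ (p.1, s)) J :=
    hg₂.uncurry_left (f := Function.curry g₂) p.1 hp.1
  have := (hasDerivAt_const p.2 (∫ t in x₀..p.1, g₁ (t, y₀))).add <|
    intervalIntegral.integral_hasDerivAt_right
      ((hcol.mono (hJc.uIcc_subset hy₀ hp.2)).intervalIntegrable)
      (hcol.stronglyMeasurableAtFilter hJ _ hp.2) (hcol.continuousAt (hJ.mem_nhds hp.2))
  rw [zero_add] at this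
  exact hasLineDerivAt_zero_one_iff.2 this

theorem hasLineDerivAt_rectPrimitive_one_zero (hI : IsOpen I) (hIc : I.OrdConnected)
    (hJc : J.OrdConnected) (hx₀ : x₀ ∈ I) (hy₀ : y₀ ∈ J) (hg₁ : ContinuousOn g₁ (I ×ˢ J))
    (hg₂ : ContinuousOn g₂ (I ×ˢ J)) (hG : ContinuousOn G (I ×ˢ J))
    (hg₁₂ : ∀ p ∈ I ×ˢ J, HasLineDerivAt ℝ g₁ (G p) p (0, 1))
    (hg₂₁ : ∀ p ∈ I ×ˢ J, HasLineDerivAt ℝ g₂ (G p) p (1, 0)) (hp : p ∈ I ×ˢ J) :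
    HasLineDerivAt ℝ (rectPrimitive g₁ g₂ x₀ y₀) (g₁ p) p (1, 0) := by
  obtain ⟨x, y⟩ := p
  obtain ⟨hx, hy⟩ := hp
  have hrow : ContinuousOn (fun t => g₁ (t, y₀)) I :=
    hg₁.uncurry_right (f := Function.curry g₁) y₀ hy₀
  have hfirst : HasDerivAt (fun u => ∫ t in x₀..u, g₁ (t, y₀)) (g₁ (x, y₀)) x :=
    intervalIntegral.integral_hasDerivAt_right
      ((hrow.mono (hIc.uIcc_subset hx₀ hx)).intervalIntegrable)
      (hrow.stronglyMeasurableAtFilter hI _ hx) (hrow.continuousAt (hI.mem_nhds hx))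
  have hftc : ∫ s in y₀..y, G (x, s) = g₁ (x, y) - g₁ (x, y₀) :=
    intervalIntegral.integral_eq_sub_of_hasDerivAt (f := fun s => g₁ (x, s))
      (fun s hs => hasLineDerivAt_zero_one_iff.1 (hg₁₂ (x, s) ⟨hx, hJc.uIcc_subset hy₀ hy hs⟩))
      (((hG.uncurry_left (f := Function.curry G) x hx).mono
        (hJc.uIcc_subset hy₀ hy)).intervalIntegrable)
  have := hfirst.add (hasDerivAt_intervalIntegral_of_hasLineDerivAt hI hJc hg₂ hG hg₂₁ hx hy₀ hy)
  rw [hftc, add_sub_cancel] at this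
  exact hasLineDerivAt_one_zero_iff.2 this

theorem exists_c1M_pdx_pdy_eq (hI : IsOpen I) (hJ : IsOpen J) (hIc : I.OrdConnected)
    (hJc : J.OrdConnected) (hg₁ : ContinuousOn g₁ (I ×ˢ J)) (hg₂ : ContinuousOn g₂ (I ×ˢ J))
    (hG : ContinuousOn G (I ×ˢ J)) (hg₁₂ : ∀ p ∈ I ×ˢ J, HasLineDerivAt ℝ g₁ (G p) p (0, 1))
    (hg₂₁ : ∀ p ∈ I ×ˢ J, HasLineDerivAt ℝ g₂ (G p) p (1, 0)) :
    ∃ f : ℝ × ℝ → E, C1M (I ×ˢ J) f ∧ ∀ p ∈ I ×ˢ J, pdx f p = g₁ p ∧ pdy f p = g₂ p := by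
  rcases (I ×ˢ J).eq_empty_or_nonempty with hD | ⟨⟨x₀, y₀⟩, hx₀, hy₀⟩
  · exact ⟨0, by simp [C1M, hD], by simp [hD]⟩
  have hf₁ := fun p (hp : p ∈ I ×ˢ J) =>
    hasLineDerivAt_rectPrimitive_one_zero hI hIc hJc hx₀ hy₀ hg₁ hg₂ hG hg₁₂ hg₂₁ hp
  have hf₂ := fun p (hp : p ∈ I ×ˢ J) =>
    hasLineDerivAt_rectPrimitive_zero_one (g₁ := g₁) (x₀ := x₀) hJ hJc hy₀ hg₂ hp
  exact ⟨rectPrimitive g₁ g₂ x₀ y₀, c1M_of_hasLineDerivAt (hI.prod hJ) hf₁ hf₂ hg₁ hg₂ hG hg₁₂ hg₂₁,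
    fun p hp => ⟨(hf₁ p hp).lineDeriv, (hf₂ p hp).lineDeriv⟩⟩

end RectanglePrimitive

namespace WeakHarmonic

variable {D : Set (ℝ × ℝ)} {N : ℝ × ℝ → E3} {p : ℝ × ℝ}

theorem hasLineDerivAt_cross3_pdx (hN : WeakHarmonic D N) (hD : IsOpen D) (hp : p ∈ D) :
    HasLineDerivAt ℝ (fun q => cross3 (N q) (pdx N q)) (cross3 (pdy N p) (pdx N p)) p (0, 1) := by
  obtain ⟨⟨hC, hxy, -⟩, -, -, h, hh⟩ := hN
  have hNxy : HasLineDerivAt ℝ (pdx N) (h p • N p) p (0, 1) :=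
    (hh p hp).1 ▸ (hxy p hp).hasLineDerivAt
  have := (hC.hasLineDerivAt hD hp (0, 1)).cross3 hNxy
  rwa [cross3_smul_self, add_zero] at this

theorem hasLineDerivAt_neg_cross3_pdy (hN : WeakHarmonic D N) (hD : IsOpen D) (hp : p ∈ D) :
    HasLineDerivAt ℝ (fun q => -cross3 (N q) (pdy N q)) (cross3 (pdy N p) (pdx N p)) p (1, 0) := by
  obtain ⟨⟨hC, -, hyx, -⟩, -, -, h, hh⟩ := hN
  have hNyx : HasLineDerivAt ℝ (pdy N) (h p • N p) p (1, 0) :=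
    (hh p hp).2 ▸ (hyx p hp).hasLineDerivAt
  have := ((hC.hasLineDerivAt hD hp (1, 0)).cross3 hNyx).neg
  rwa [cross3_smul_self, add_zero, cross3_anticomm] at this

end WeakHarmonic

/-- Given a weakly harmonic `N : D → S²` on a product of open intervals `D = I × J`,
there exists a weakly-regular C^{1M} map `f` with `f_x = N × N_x` and `f_y = −N × N_y`;
moreover, for any C¹ map `f` solving this system (with `N` merely C¹ into the sphere
with `⟨N,N_x⟩ = ⟨N,N_y⟩ = 0`), `f` is regular (resp. weakly regular) at `p` iff
`N` is regular (resp. weakly regular) at `p`. -/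
theorem stmt_2 (I J : Set ℝ) (hI : IsOpen I) (hJ : IsOpen J)
    (hIc : I.OrdConnected) (hJc : J.OrdConnected)
    (N : ℝ × ℝ → E3) (hN : WeakHarmonic (I ×ˢ J) N) :
    (∃ f : ℝ × ℝ → E3, C1M (I ×ˢ J) f ∧
      (∀ p ∈ I ×ˢ J,
        pdx f p = cross3 (N p) (pdx N p) ∧ pdy f p = -cross3 (N p) (pdy N p)) ∧
      (∀ p ∈ I ×ˢ J, pdx f p ≠ 0 ∧ pdy f p ≠ 0)) ∧
    (∀ f' N' : ℝ × ℝ → E3, ContDiffOn ℝ 1 f' (I ×ˢ J) → ContDiffOn ℝ 1 N' (I ×ˢ J) →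
      (∀ p ∈ I ×ˢ J, ‖N' p‖ = 1) →
      (∀ p ∈ I ×ˢ J, dot (N' p) (pdx N' p) = 0 ∧ dot (N' p) (pdy N' p) = 0) →
      (∀ p ∈ I ×ˢ J,
        pdx f' p = cross3 (N' p) (pdx N' p) ∧ pdy f' p = -cross3 (N' p) (pdy N' p)) →
      ∀ p ∈ I ×ˢ J,
        (LinearIndependent ℝ ![pdx f' p, pdy f' p] ↔
          LinearIndependent ℝ ![pdx N' p, pdy N' p]) ∧
        ((pdx f' p ≠ 0 ∧ pdy f' p ≠ 0) ↔ (pdx N' p ≠ 0 ∧ pdy N' p ≠ 0))) := by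
  have hD : IsOpen (I ×ˢ J) := hI.prod hJ
  refine ⟨?_, fun f' N' _ _ hunit horth hf' p hp => ?_⟩
  · have ⟨⟨hC, _⟩, hunitN, hregN, _⟩ := hN
    have hNc : ContinuousOn N (I ×ˢ J) := hC.continuousOn
    have hNx : ContinuousOn (pdx N) (I ×ˢ J) := hC.continuousOn_lineDeriv hD _
    have hNy : ContinuousOn (pdy N) (I ×ˢ J) := hC.continuousOn_lineDeriv hD _
    obtain ⟨f, hf, hfN⟩ := exists_c1M_pdx_pdy_eq (g₂ := fun q => -cross3 (N q) (pdy N q))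
      hI hJ hIc hJc (hNc.cross3 hNx) (hNc.cross3 hNy).neg (hNy.cross3 hNx)
      (fun p hp => hN.hasLineDerivAt_cross3_pdx hD hp)
      (fun p hp => hN.hasLineDerivAt_neg_cross3_pdy hD hp)
    refine ⟨f, hf, hfN, fun p hp => ?_⟩
    have horthN (v : ℝ × ℝ) := dot_lineDeriv_eq_zero_of_norm_eq_one hC hD hunitN hp v
    rw [(hfN p hp).1, (hfN p hp).2, neg_ne_zero]
    exact ⟨(cross3_ne_zero_iff (hunitN p hp) (horthN _)).2 (hregN p hp).1,
      (cross3_ne_zero_iff (hunitN p hp) (horthN _)).2 (hregN p hp).2⟩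
  · rw [(hf' p hp).1, (hf' p hp).2, neg_ne_zero, cross3_ne_zero_iff (hunit p hp) (horth p hp).1,
      cross3_ne_zero_iff (hunit p hp) (horth p hp).2]
    exact ⟨linearIndependent_cross3_pair_iff (hunit p hp) (horth p hp).1 (horth p hp).2, Iff.rfl⟩
end
end

section
/- Let f : D → ℝ³ be a weakly-regular C^{1M} ps-front with associated weakly harmonic map N : D → S². Then ∂_y⟨f_x, f_x⟩ = 0 and ∂_x⟨f_y, f_y⟩ = 0 on D; that is, ⟨f_x,f_x⟩ is a function of x alone and ⟨f_y,f_y⟩ is a function of y alone. -/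
/-!
Since `‖N‖ = 1`, `N` is orthogonal to `N_x`, so Lagrange's identity gives
`⟨f_x, f_x⟩ = ‖N × N_x‖² = ‖N_x‖²` near every point of `D`. Its `y`-derivative is
`2⟨N_x, N_xy⟩ = 2h⟨N_x, N⟩ = 0`; symmetrically, `⟨f_y, f_y⟩ = ‖N_y‖²` has `x`-derivative
`2h⟨N_y, N⟩ = 0`.
-/

noncomputable section

open Real Set

open scoped RealInnerProductSpace Topology

section InnerProductSpace

variable {F E : Type*} [NormedAddCommGroup F] [NormedSpace ℝ F]
  [NormedAddCommGroup E] [InnerProductSpace ℝ E]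

theorem HasLineDerivAt.inner_self {g : F → E} {g' : E} {p w : F}
    (hg : HasLineDerivAt ℝ g g' p w) :
    HasLineDerivAt ℝ (fun q => ⟪g q, g q⟫) (2 * ⟪g p, g'⟫) p w := by
  simpa [HasLineDerivAt, real_inner_comm (g p) g', two_mul] using HasDerivAt.inner ℝ hg hg

theorem HasLineDerivAt.inner_eq_zero_of_norm_eventually_eq {g : F → E} {g' : E} {p w : F}
    {c : ℝ} (hg : HasLineDerivAt ℝ g g' p w) (hc : ∀ᶠ q in 𝓝 p, ‖g q‖ = c) :
    ⟪g p, g'⟫ = 0 := by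
  have hconst : (fun q => ⟪g q, g q⟫) =ᶠ[𝓝 p] fun _ => c ^ 2 := by
    filter_upwards [hc] with q hq
    rw [real_inner_self_eq_norm_sq, hq]
  have hzero : HasLineDerivAt ℝ (fun q => ⟪g q, g q⟫) 0 p w :=
    hconst.hasLineDerivAt_iff.mpr (hasDerivAt_const _ _)
  simpa using hg.inner_self.unique hzero

theorem HasLineDerivAt.inner_self_eq_zero {g : F → E} {n : E} {c : ℝ} {p w : F}
    (hg : HasLineDerivAt ℝ g (c • n) p w) (hng : ⟪n, g p⟫ = 0) :
    HasLineDerivAt ℝ (fun q => ⟪g q, g q⟫) 0 p w := by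
  simpa [inner_smul_right, real_inner_comm, hng] using hg.inner_self

end InnerProductSpace

theorem dot_cross3_self (a b : E3) :
    dot (cross3 a b) (cross3 a b) = dot a a * dot b b - dot a b ^ 2 := by
  simp only [dot, cross3, PiLp.inner_apply, Fin.sum_univ_three, RCLike.inner_apply, conj_trivial,
    WithLp.equiv_symm_apply, Matrix.cons_val]
  ring

theorem dot_cross3_self_of_norm_eq_one {a b : E3} (ha : ‖a‖ = 1) (hab : dot a b = 0) :
    dot (cross3 a b) (cross3 a b) = dot b b := by
  rw [dot_cross3_self, hab, dot, real_inner_self_eq_norm_sq, ha]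
  ring

theorem WeakHarmonic.dot_lineDeriv_eq_zero {D : Set (ℝ × ℝ)} {N : ℝ × ℝ → E3}
    (hD : IsOpen D) (hN : WeakHarmonic D N) {q : ℝ × ℝ} (hq : q ∈ D) (v : ℝ × ℝ) :
    dot (N q) (lineDeriv ℝ N q v) = 0 :=
  ((hN.1.1.contDiffAt (hD.mem_nhds hq)).differentiableAt one_ne_zero).lineDifferentiableAt
    |>.hasLineDerivAt.inner_eq_zero_of_norm_eventually_eq
      (Filter.eventually_of_mem (hD.mem_nhds hq) hN.2.1)

section PsFront

variable {D : Set (ℝ × ℝ)} {f N : ℝ × ℝ → E3}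

theorem PsFront.dot_pdx_self (hD : IsOpen D) (h : PsFront D f N) {q : ℝ × ℝ} (hq : q ∈ D) :
    dot (pdx f q) (pdx f q) = dot (pdx N q) (pdx N q) := by
  obtain ⟨-, -, hN, hfront⟩ := h
  rw [(hfront q hq).1]
  exact dot_cross3_self_of_norm_eq_one (hN.2.1 q hq) (hN.dot_lineDeriv_eq_zero hD hq _)

theorem PsFront.dot_pdy_self (hD : IsOpen D) (h : PsFront D f N) {q : ℝ × ℝ} (hq : q ∈ D) :
    dot (pdy f q) (pdy f q) = dot (pdy N q) (pdy N q) := by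
  obtain ⟨-, -, hN, hfront⟩ := h
  rw [(hfront q hq).2, dot, inner_neg_neg, ← dot]
  exact dot_cross3_self_of_norm_eq_one (hN.2.1 q hq) (hN.dot_lineDeriv_eq_zero hD hq _)

end PsFront

/-- For a weakly-regular C^{1M} ps-front, `∂y⟨f_x,f_x⟩ = 0` and `∂x⟨f_y,f_y⟩ = 0` on `D`:
`⟨f_x,f_x⟩` depends only on `x` and `⟨f_y,f_y⟩` depends only on `y`. -/
theorem stmt_3 (D : Set (ℝ × ℝ)) (hD : IsOpen D)
    (f N : ℝ × ℝ → E3) (h : PsFront D f N) :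
    ∀ p ∈ D,
      HasLineDerivAt ℝ (fun q => dot (pdx f q) (pdx f q)) 0 p ((0 : ℝ), (1 : ℝ)) ∧
      HasLineDerivAt ℝ (fun q => dot (pdy f q) (pdy f q)) 0 p ((1 : ℝ), (0 : ℝ)) := by
  intro p hp
  have hN := h.2.2.1
  obtain ⟨⟨-, hNxy, hNyx, -⟩, -, -, H, hH⟩ := id hN
  have hdyNx : HasLineDerivAt ℝ (pdx N) (H p • N p) p ((0 : ℝ), (1 : ℝ)) :=
    (hH p hp).1 ▸ (hNxy p hp).hasLineDerivAt
  have hdxNy : HasLineDerivAt ℝ (pdy N) (H p • N p) p ((1 : ℝ), (0 : ℝ)) :=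
    (hH p hp).2 ▸ (hNyx p hp).hasLineDerivAt
  have hx : (fun q => dot (pdx f q) (pdx f q)) =ᶠ[𝓝 p] fun q => ⟪pdx N q, pdx N q⟫ :=
    Filter.eventually_of_mem (hD.mem_nhds hp) fun q hq => h.dot_pdx_self hD hq
  have hy : (fun q => dot (pdy f q) (pdy f q)) =ᶠ[𝓝 p] fun q => ⟪pdy N q, pdy N q⟫ :=
    Filter.eventually_of_mem (hD.mem_nhds hp) fun q hq => h.dot_pdy_self hD hq
  exact ⟨hx.hasLineDerivAt_iff.mpr (hdyNx.inner_self_eq_zero (hN.dot_lineDeriv_eq_zero hD hp _)),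
    hy.hasLineDerivAt_iff.mpr (hdxNy.inner_self_eq_zero (hN.dot_lineDeriv_eq_zero hD hp _))⟩

end
end

section
/- There is no weakly-regular C^{1M} Chebyshev ps-front on a nonempty open set: if D ⊆ ℝ² is a nonempty open set, f : D → ℝ³ is a weakly-regular C^{1M} Chebyshev ps-front with weakly harmonic map N, then it is impossible that N_xy = 0 identically on D (equivalently, the harmonicity factor h cannot vanish identically on any nonempty open subset of D). -/
noncomputable section

open Real Set

/-!
If `N_xy = 0`, then on a small rectangle `I × J` around a point `(x₀, y₀)` the partial
`N_x(x, y) = a(x)` depends on `x` alone and `N_y(x, y) = b(y)` on `y` alone. Differentiating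
`⟪N, N_x⟫ = 0` in `y` gives `⟪a(x), b(y)⟫ = 0`, so `a(I)` and `b(J)` span orthogonal nonzero
subspaces of `ℝ³`, and one of them, say the first, is the line through `a(x₀)`. Then `N ⊥ a(x₀)`
on the rectangle, and differentiating `⟪N, a(x₀)⟫ = 0` in `x` at `(x₀, y₀)` gives
`‖a(x₀)‖² = 0`. The dimension bound is essential: the Clifford torus
`(cos x, sin x, cos y, sin y) / √2` in `S³` satisfies `N_xy = 0`.
-/

open Module Filter Topology Metric
open scoped RealInnerProductSpace

section Slices

variable {F : Type*} [NormedAddCommGroup F] [NormedSpace ℝ F] {g : ℝ × ℝ → F} {x y : ℝ}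

theorem LineDifferentiableAt.hasDerivAt_pdx (h : LineDifferentiableAt ℝ g (x, y) (1, 0)) :
    HasDerivAt (fun s => g (s, y)) (pdx g (x, y)) x := by
  have h' : HasDerivAt (fun t => g ((x, y) + t • (1, 0))) (pdx g (x, y)) (x - x) := by
    rw [sub_self]; exact h.hasLineDerivAt
  simpa using h'.comp_sub_const x x

theorem LineDifferentiableAt.hasDerivAt_pdy (h : LineDifferentiableAt ℝ g (x, y) (0, 1)) :
    HasDerivAt (fun s => g (x, s)) (pdy g (x, y)) y := by
  have h' : HasDerivAt (fun t => g ((x, y) + t • (0, 1))) (pdy g (x, y)) (y - y) := by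
    rw [sub_self]; exact h.hasLineDerivAt
  simpa using h'.comp_sub_const y y

theorem eq_of_pdx_eq_zero {I : Set ℝ} (hI : IsOpen I) (hI' : IsPreconnected I)
    (hg : ∀ s ∈ I, LineDifferentiableAt ℝ g (s, y) (1, 0)) (hg₀ : ∀ s ∈ I, pdx g (s, y) = 0)
    {x x' : ℝ} (hx : x ∈ I) (hx' : x' ∈ I) : g (x, y) = g (x', y) :=
  hI.is_const_of_deriv_eq_zero hI'
    (fun s hs => (hg s hs).hasDerivAt_pdx.differentiableAt.differentiableWithinAt)
    (fun s hs => by rw [(hg s hs).hasDerivAt_pdx.deriv, hg₀ s hs]; rfl) hx hx'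

theorem eq_of_pdy_eq_zero {J : Set ℝ} (hJ : IsOpen J) (hJ' : IsPreconnected J)
    (hg : ∀ s ∈ J, LineDifferentiableAt ℝ g (x, s) (0, 1)) (hg₀ : ∀ s ∈ J, pdy g (x, s) = 0)
    {y y' : ℝ} (hy : y ∈ J) (hy' : y' ∈ J) : g (x, y) = g (x, y') :=
  hJ.is_const_of_deriv_eq_zero hJ'
    (fun s hs => (hg s hs).hasDerivAt_pdy.differentiableAt.differentiableWithinAt)
    (fun s hs => by rw [(hg s hs).hasDerivAt_pdy.deriv, hg₀ s hs]; rfl) hy hy'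

end Slices

section Orthogonality

variable {V E : Type*} [NormedAddCommGroup V] [NormedSpace ℝ V]
  [NormedAddCommGroup E] [InnerProductSpace ℝ E]

theorem HasLineDerivAt.inner_add_inner_eq_zero {f g : V → E} {f' g' : E} {p v : V} {c : ℝ}
    (hf : HasLineDerivAt ℝ f f' p v) (hg : HasLineDerivAt ℝ g g' p v)
    (hc : ∀ᶠ q in 𝓝 p, ⟪f q, g q⟫ = c) : ⟪f p, g'⟫ + ⟪f', g p⟫ = 0 := by
  have hline : Tendsto (fun t : ℝ => p + t • v) (𝓝 0) (𝓝 p) := by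
    have hcont : Continuous fun t : ℝ => p + t • v := by fun_prop
    simpa using hcont.tendsto 0
  have hconst : HasDerivAt (fun t : ℝ => ⟪f (p + t • v), g (p + t • v)⟫) 0 0 :=
    (hasDerivAt_const (0 : ℝ) c).congr_of_eventuallyEq (hline.eventually hc)
  simpa using (HasDerivAt.inner ℝ hf hg).unique hconst

theorem LineDifferentiableAt.inner_lineDeriv_eq_zero {N : V → E} {p v : V}
    (hN : LineDifferentiableAt ℝ N p v) (hunit : ∀ᶠ q in 𝓝 p, ‖N q‖ = 1) :
    ⟪N p, lineDeriv ℝ N p v⟫ = 0 := by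
  have := hN.hasLineDerivAt.inner_add_inner_eq_zero hN.hasLineDerivAt (c := 1)
    (hunit.mono fun q hq => by rw [real_inner_self_eq_norm_sq, hq, one_pow])
  rw [real_inner_comm (N p)] at this
  linarith

theorem LineDifferentiableAt.lineDeriv_eq_zero_of_eventually_inner_eq_zero {N : V → E}
    {p v : V} (hN : LineDifferentiableAt ℝ N p v)
    (h : ∀ᶠ q in 𝓝 p, ⟪N q, lineDeriv ℝ N p v⟫ = 0) : lineDeriv ℝ N p v = 0 := by
  have hconst : HasLineDerivAt ℝ (fun _ => lineDeriv ℝ N p v) 0 p v := hasDerivAt_const _ _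
  have := hN.hasLineDerivAt.inner_add_inner_eq_zero hconst h
  rwa [inner_zero_right, zero_add, inner_self_eq_zero] at this

theorem inner_eq_zero_of_mem_span_singleton {u v w : E} (hu : u ∈ ℝ ∙ v) (hu₀ : u ≠ 0)
    (h : ⟪w, u⟫ = 0) : ⟪w, v⟫ = 0 := by
  obtain ⟨c, rfl⟩ := Submodule.mem_span_singleton.1 hu
  rw [real_inner_smul_right] at h
  exact (mul_eq_zero.1 h).resolve_left fun hc => hu₀ (by rw [hc, zero_smul])

theorem subset_span_singleton_or_subset_span_singleton [FiniteDimensional ℝ E]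
    (hdim : finrank ℝ E ≤ 3) {S T : Set E} (horth : ∀ s ∈ S, ∀ t ∈ T, ⟪s, t⟫ = 0)
    {s₀ t₀ : E} (hs₀ : s₀ ∈ S) (hs₀' : s₀ ≠ 0) (ht₀ : t₀ ∈ T) (ht₀' : t₀ ≠ 0) :
    S ⊆ ℝ ∙ s₀ ∨ T ⊆ ℝ ∙ t₀ := by
  have two_le {U : Set E} {u₀ : E} (hu₀ : u₀ ∈ U) (hu₀' : u₀ ≠ 0) (hU : ¬ U ⊆ ℝ ∙ u₀) :
      2 ≤ finrank ℝ (Submodule.span ℝ U) := by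
    have hlt : ℝ ∙ u₀ < Submodule.span ℝ U :=
      lt_of_le_not_ge (Submodule.span_mono (Set.singleton_subset_iff.2 hu₀))
        fun h => hU (Submodule.subset_span.trans h)
    have := Submodule.finrank_lt_finrank_of_lt hlt
    rwa [finrank_span_singleton hu₀'] at this
  by_contra! ⟨hS, hT⟩
  have hle : Submodule.span ℝ S ≤ (Submodule.span ℝ T)ᗮ :=
    Submodule.isOrtho_iff_le.1 (Submodule.isOrtho_span.2 fun s hs t ht => horth s hs t ht)
  have := Submodule.finrank_add_finrank_orthogonal (Submodule.span ℝ T)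
  have := Submodule.finrank_mono hle
  have := two_le hs₀ hs₀' hS
  have := two_le ht₀ ht₀' hT
  omega

end Orthogonality

namespace C1M

variable {E : Type*} [NormedAddCommGroup E] [InnerProductSpace ℝ E] {D : Set (ℝ × ℝ)}
  {N : ℝ × ℝ → E} {p : ℝ × ℝ}

theorem differentiableAt (hN : C1M D N) (hD : IsOpen D) (hp : p ∈ D) :
    DifferentiableAt ℝ N p :=
  (hN.1.contDiffAt (hD.mem_nhds hp)).differentiableAt one_ne_zero

theorem inner_pdx_eq_zero (hN : C1M D N) (hD : IsOpen D) (hunit : ∀ q ∈ D, ‖N q‖ = 1)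
    (hp : p ∈ D) : ⟪N p, pdx N p⟫ = 0 :=
  (hN.differentiableAt hD hp).lineDifferentiableAt.inner_lineDeriv_eq_zero
    (eventually_of_mem (hD.mem_nhds hp) hunit)

theorem inner_pdy_eq_zero (hN : C1M D N) (hD : IsOpen D) (hunit : ∀ q ∈ D, ‖N q‖ = 1)
    (hp : p ∈ D) : ⟪N p, pdy N p⟫ = 0 :=
  (hN.differentiableAt hD hp).lineDifferentiableAt.inner_lineDeriv_eq_zero
    (eventually_of_mem (hD.mem_nhds hp) hunit)

theorem inner_pdx_pdy_eq_zero (hN : C1M D N) (hD : IsOpen D) (hunit : ∀ q ∈ D, ‖N q‖ = 1)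
    (hxy : ∀ q ∈ D, pdy (pdx N) q = 0) (hp : p ∈ D) : ⟪pdx N p, pdy N p⟫ = 0 := by
  have := (hN.differentiableAt hD hp).lineDifferentiableAt.hasLineDerivAt.inner_add_inner_eq_zero
    (hN.2.1 p hp).hasLineDerivAt
    (eventually_of_mem (hD.mem_nhds hp) fun q hq => hN.inner_pdx_eq_zero hD hunit hq)
  rwa [show lineDeriv ℝ (pdx N) p (0, 1) = 0 from hxy p hp, inner_zero_right, zero_add,
    real_inner_comm] at this

theorem not_forall_pdy_pdx_eq_zero [FiniteDimensional ℝ E] (hdim : finrank ℝ E ≤ 3)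
    (hN : C1M D N) (hD : IsOpen D) (hne : D.Nonempty) (hunit : ∀ q ∈ D, ‖N q‖ = 1)
    (hreg : ∀ q ∈ D, pdx N q ≠ 0 ∧ pdy N q ≠ 0) : ¬ ∀ q ∈ D, pdy (pdx N) q = 0 := by
  intro hxy
  have ⟨_, hLDx, hLDy, _, _, hmixed⟩ := hN
  obtain ⟨⟨x₀, y₀⟩, hp₀⟩ := hne
  obtain ⟨r, hr, hball⟩ := isOpen_iff.mp hD _ hp₀
  set I := ball x₀ r
  set J := ball y₀ r
  have hIJ : I ×ˢ J ⊆ D := by rwa [ball_prod_same]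
  have hx₀ : x₀ ∈ I := mem_ball_self hr
  have hy₀ : y₀ ∈ J := mem_ball_self hr
  have ha : ∀ x ∈ I, ∀ y ∈ J, pdx N (x, y) = pdx N (x, y₀) := fun x hx y hy =>
    eq_of_pdy_eq_zero isOpen_ball (convex_ball y₀ r).isPreconnected
      (fun s hs => hLDx _ (hIJ ⟨hx, hs⟩)) (fun s hs => hxy _ (hIJ ⟨hx, hs⟩)) hy hy₀
  have hb : ∀ x ∈ I, ∀ y ∈ J, pdy N (x, y) = pdy N (x₀, y) := fun x hx y hy =>
    eq_of_pdx_eq_zero isOpen_ball (convex_ball x₀ r).isPreconnected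
      (fun s hs => hLDy _ (hIJ ⟨hs, hy⟩))
      (fun s hs => (hmixed _ (hIJ ⟨hs, hy⟩)).symm.trans (hxy _ (hIJ ⟨hs, hy⟩))) hx hx₀
  have horth : ∀ u ∈ (fun x => pdx N (x, y₀)) '' I, ∀ w ∈ (fun y => pdy N (x₀, y)) '' J,
      ⟪u, w⟫ = 0 := by
    rintro _ ⟨x, hx, rfl⟩ _ ⟨y, hy, rfl⟩
    dsimp only
    rw [← ha x hx y hy, ← hb x hx y hy]
    exact hN.inner_pdx_pdy_eq_zero hD hunit hxy (hIJ ⟨hx, hy⟩)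
  have hrect : I ×ˢ J ∈ 𝓝 (x₀, y₀) :=
    prod_mem_nhds (isOpen_ball.mem_nhds hx₀) (isOpen_ball.mem_nhds hy₀)
  have hdiff₀ : ∀ v, LineDifferentiableAt ℝ N (x₀, y₀) v := fun _ =>
    (hN.differentiableAt hD hp₀).lineDifferentiableAt
  rcases subset_span_singleton_or_subset_span_singleton hdim horth (mem_image_of_mem _ hx₀)
    (hreg _ hp₀).1 (mem_image_of_mem _ hy₀) (hreg _ hp₀).2 with hS | hT
  · refine (hreg _ hp₀).1 ((hdiff₀ _).lineDeriv_eq_zero_of_eventually_inner_eq_zero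
      (eventually_of_mem hrect ?_))
    rintro ⟨x, y⟩ ⟨hx, hy⟩
    have hxy' := hIJ ⟨hx, hy⟩
    refine inner_eq_zero_of_mem_span_singleton (hS ⟨x, hx, rfl⟩) ?_ ?_ <;>
      dsimp only <;> rw [← ha x hx y hy]
    exacts [(hreg _ hxy').1, hN.inner_pdx_eq_zero hD hunit hxy']
  · refine (hreg _ hp₀).2 ((hdiff₀ _).lineDeriv_eq_zero_of_eventually_inner_eq_zero
      (eventually_of_mem hrect ?_))
    rintro ⟨x, y⟩ ⟨hx, hy⟩
    have hxy' := hIJ ⟨hx, hy⟩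
    refine inner_eq_zero_of_mem_span_singleton (hT ⟨y, hy, rfl⟩) ?_ ?_ <;>
      dsimp only <;> rw [← hb x hx y hy]
    exacts [(hreg _ hxy').2, hN.inner_pdy_eq_zero hD hunit hxy']

end C1M

theorem stmt_9_general (D : Set (ℝ × ℝ)) (hD : IsOpen D) (hne : D.Nonempty)
    (f N : ℝ × ℝ → E3) (hps : PsFront D f N) :
    ¬ (∀ p ∈ D, pdy (pdx N) p = 0) := by
  obtain ⟨-, -, ⟨hN, hunit, hreg, -⟩, -⟩ := hps
  exact hN.not_forall_pdy_pdx_eq_zero finrank_euclideanSpace_fin.le hD hne hunit hreg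

/-- For a weakly-regular C^{1M} Chebyshev ps-front on a nonempty open set `D`, it is
impossible that `N_xy = 0` identically on `D`. -/
theorem stmt_9 (D : Set (ℝ × ℝ)) (hD : IsOpen D) (hne : D.Nonempty)
    (f N : ℝ × ℝ → E3) (hps : PsFront D f N)
    (hE : ∀ p ∈ D, ‖pdx f p‖ = 1) (hG : ∀ p ∈ D, ‖pdy f p‖ = 1) :
    ¬ (∀ p ∈ D, pdy (pdx N) p = 0) :=
  stmt_9_general D hD hne f N hps
end
end

section
/- (Local graph-coordinate regularization.) Let D ⊆ ℝ² be open and f : D → ℝ³ a regular C^{1M} immersion in asymptotic Chebyshev coordinates: ‖f_x‖ ≡ 1, ‖f_y‖ ≡ 1, cos θ = ⟨f_x, f_y⟩ with θ : D → (0,π) continuous, N := (f_x × f_y)/sin θ is C^{1M}, N_xy = N_yx = (cos θ)·N, f_x = N × N_x and f_y = −N × N_y. Then for every p ∈ D there exist open sets U ⊆ D with p ∈ U and V ⊆ ℝ², and a C¹ diffeomorphism S : V → U, such that f ∘ S : V → ℝ³ is C² (a twice continuously differentiable regular immersion). -/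
noncomputable section

open Real Set

/-! Project `f` to its tangent plane at `p` by `L u = (⟪f_x p, u⟫, ⟪f_y p, u⟫)`. The map
`L ∘ f` has the Gram matrix of `f_x p, f_y p` as derivative at `p`, so it has a local C¹ inverse
`S`, and `f ∘ S` is a graph over the tangent plane. As `f_x = N × N_x` and `f_y = -N × N_y`,
the field `N` is normal to `f`, so the derivative of `f ∘ S` at `v` is the linear map `Λ`
with `L ∘ Λ = id` whose image is orthogonal to `N (S v)`, namely `Λ = T⁻¹ ∘ inl` with
`T u = (L u, ⟪N (S v), u⟫)`. Since `N` is C¹ and inversion of linear maps is smooth, `Λ` depends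
C¹ on `v`, so `f ∘ S` is C². -/

open scoped InnerProductSpace
open Function Filter Topology Module

section Partials

variable {E : Type*} [NormedAddCommGroup E] [NormedSpace ℝ E] {f : ℝ × ℝ → E} {q : ℝ × ℝ}

theorem fderiv_apply_eq_pdx_pdy (hf : DifferentiableAt ℝ f q) (w : ℝ × ℝ) :
    fderiv ℝ f q w = w.1 • pdx f q + w.2 • pdy f q := by
  rw [pdx, pdy, hf.lineDeriv_eq_fderiv, hf.lineDeriv_eq_fderiv, ← map_smul, ← map_smul,
    ← map_add]
  congr 1
  ext <;> simp

theorem linearIndependent_pdx_pdy_iff_injective_fderiv (hf : DifferentiableAt ℝ f q) :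
    LinearIndependent ℝ ![pdx f q, pdy f q] ↔ Injective (fderiv ℝ f q) := by
  rw [LinearIndependent.pair_iff, injective_iff_map_eq_zero]
  simp only [fderiv_apply_eq_pdx_pdy hf, Prod.forall, Prod.mk_eq_zero]

end Partials

theorem ContinuousLinearMap.isInvertible_of_injective {𝕜 V W : Type*}
    [NontriviallyNormedField 𝕜] [CompleteSpace 𝕜]
    [NormedAddCommGroup V] [NormedSpace 𝕜 V] [FiniteDimensional 𝕜 V]
    [NormedAddCommGroup W] [NormedSpace 𝕜 W] [FiniteDimensional 𝕜 W]
    {T : V →L[𝕜] W} (hT : Injective T) (hdim : finrank 𝕜 V = finrank 𝕜 W) : T.IsInvertible :=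
  ⟨(T.toLinearMap.linearEquivOfInjective hT hdim).toContinuousLinearEquiv, rfl⟩

theorem ContDiffAt.exists_bijOn_localInverse {𝕂 : Type*} [RCLike 𝕂] {E F : Type*}
    [NormedAddCommGroup E] [NormedSpace 𝕂 E] [CompleteSpace E]
    [NormedAddCommGroup F] [NormedSpace 𝕂 F] {g : E → F} {M : E ≃L[𝕂] F} {p : E} {n : ℕ}
    (hg : ContDiffAt 𝕂 n g p) (hg' : HasFDerivAt g (M : E →L[𝕂] F) p) (hn : n ≠ 0)
    {W : Set E} (hW : IsOpen W) (hpW : p ∈ W) :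
    ∃ (U : Set E) (V : Set F) (S : F → E), IsOpen U ∧ p ∈ U ∧ U ⊆ W ∧ IsOpen V ∧
      BijOn S V U ∧ ContDiffOn 𝕂 n S V ∧ (∀ q ∈ V, g (S q) = q) ∧ ∀ q ∈ U, S (g q) = q := by
  have hn' : (n : WithTop ℕ∞) ≠ 0 := by exact_mod_cast hn
  set Φ := hg.toOpenPartialHomeomorph g hg' hn'
  obtain ⟨t, ht, hSt⟩ := (hg.to_localInverse hg' hn').contDiffOn le_rfl (by simp)
  obtain ⟨V₁, hV₁t, hV₁, hpV₁⟩ := mem_nhds_iff.1 ht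
  set U := (Φ.source ∩ Φ ⁻¹' V₁) ∩ W
  have hU : IsOpen U := (Φ.isOpen_inter_preimage hV₁).inter hW
  set V := Φ.target ∩ Φ.symm ⁻¹' U
  have hinv : InvOn g Φ.symm V U :=
    ⟨fun q hq => Φ.right_inv hq.1, fun q hq => Φ.left_inv hq.1.1⟩
  have hVV₁ : V ⊆ V₁ := fun q hq => hinv.1 hq ▸ hq.2.1.2
  refine ⟨U, V, Φ.symm, hU, ⟨⟨hg.mem_toOpenPartialHomeomorph_source hg' hn', hpV₁⟩, hpW⟩,
    inter_subset_right, Φ.isOpen_inter_preimage_symm hU,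
    hinv.bijOn (fun q hq => hq.2) fun q hq => ⟨Φ.map_source hq.1.1, by simpa [hinv.2 hq] using hq⟩,
    (hSt.mono hV₁t).mono hVV₁, hinv.1, hinv.2⟩

section InnerProduct

variable {E G : Type*} [NormedAddCommGroup E] [InnerProductSpace ℝ E]
  [NormedAddCommGroup G] [NormedSpace ℝ G]

def innerSLProd (a b : E) : E →L[ℝ] ℝ × ℝ := (innerSL ℝ a).prod (innerSL ℝ b)

@[simp]
theorem innerSLProd_apply (a b u : E) : innerSLProd a b u = (⟪a, u⟫_ℝ, ⟪b, u⟫_ℝ) := rfl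

theorem injective_innerSLProd_comp {F : ℝ × ℝ →L[ℝ] E} (hF : Injective F) :
    Injective ((innerSLProd (F (1, 0)) (F (0, 1))).comp F) := by
  refine (injective_iff_map_eq_zero _).2 fun w hw => hF.eq_iff' F.map_zero |>.1 ?_
  have hsplit : F w = w.1 • F (1, 0) + w.2 • F (0, 1) := by
    rw [← map_smul, ← map_smul, ← map_add]
    congr 1
    ext <;> simp
  simp only [ContinuousLinearMap.comp_apply, innerSLProd_apply, Prod.mk_eq_zero] at hw
  rw [← inner_self_eq_zero (𝕜 := ℝ)]
  nth_rw 1 [hsplit]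
  rw [inner_add_left, real_inner_smul_left, real_inner_smul_left, hw.1, hw.2]
  simp

theorem isInvertible_innerSLProd_pdx_pdy_comp_fderiv {f : ℝ × ℝ → E} {p : ℝ × ℝ}
    (hf : DifferentiableAt ℝ f p) (hreg : LinearIndependent ℝ ![pdx f p, pdy f p]) :
    ((innerSLProd (pdx f p) (pdy f p)).comp (fderiv ℝ f p)).IsInvertible := by
  refine ContinuousLinearMap.isInvertible_of_injective ?_ rfl
  have := injective_innerSLProd_comp ((linearIndependent_pdx_pdy_iff_injective_fderiv hf).1 hreg)
  rwa [← hf.lineDeriv_eq_fderiv, ← hf.lineDeriv_eq_fderiv] at this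

theorem injective_innerSLProd_prod_innerSL [FiniteDimensional ℝ E] (hE : finrank ℝ E = 3)
    {a b n : E} (hab : LinearIndependent ℝ ![a, b]) (hn : n ≠ 0) (ha : ⟪n, a⟫_ℝ = 0)
    (hb : ⟪n, b⟫_ℝ = 0) :
    Injective ((innerSLProd a b).prod (innerSL ℝ n)) := by
  have hK : finrank ℝ (Submodule.span ℝ (Set.range ![a, b]))ᗮ = 1 := by
    have := (Submodule.span ℝ (Set.range ![a, b])).finrank_add_finrank_orthogonal
    rw [finrank_span_eq_card hab, hE, Fintype.card_fin] at this
    omega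
  set K := (Submodule.span ℝ (Set.range ![a, b]))ᗮ
  have hmem : ∀ u : E, ⟪a, u⟫_ℝ = 0 → ⟪b, u⟫_ℝ = 0 → u ∈ K := by
    intro u hau hbu
    have hspan : Submodule.span ℝ (Set.range ![a, b]) ≤ LinearMap.ker (innerₛₗ ℝ u) :=
      Submodule.span_le.2 <| by
        rintro _ ⟨i, rfl⟩
        fin_cases i <;> simp [real_inner_comm, hau, hbu]
    exact (Submodule.mem_orthogonal' _ _).2 fun v hv => hspan hv
  have hnK : n ∈ K := hmem n (by rwa [real_inner_comm]) (by rwa [real_inner_comm])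
  refine (injective_iff_map_eq_zero _).2 fun u hu => ?_
  simp only [ContinuousLinearMap.prod_apply, innerSLProd_apply, innerSL_apply_apply,
    Prod.mk_eq_zero] at hu
  obtain ⟨c, hc⟩ := (finrank_eq_one_iff_of_nonzero' (⟨n, hnK⟩ : K) (by simpa using hn)).1 hK
    ⟨u, hmem u hu.1.1 hu.1.2⟩
  have hc' : c • n = u := congrArg Subtype.val hc
  have : c * ⟪n, n⟫_ℝ = 0 := by rw [← real_inner_smul_right, hc', hu.2]
  rw [← hc', (mul_eq_zero.1 this).resolve_right (inner_self_ne_zero.2 hn), zero_smul]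

theorem HasFDerivAt.eq_inverse_prod_innerSL_comp_inl {g : G → E} {Λ : G →L[ℝ] E} {v : G}
    (hg : HasFDerivAt g Λ v) {L : E →L[ℝ] G} (hL : ∀ᶠ x in 𝓝 v, L (g x) = x) {m : E}
    (hm : ∀ w, ⟪m, Λ w⟫_ℝ = 0) (hLm : (L.prod (innerSL ℝ m)).IsInvertible) :
    Λ = (L.prod (innerSL ℝ m)).inverse.comp (ContinuousLinearMap.inl ℝ G ℝ) := by
  have hLΛ : L.comp Λ = ContinuousLinearMap.id ℝ G :=
    (L.hasFDerivAt.comp v hg).unique ((hasFDerivAt_id v).congr_of_eventuallyEq hL)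
  ext1 w
  refine (hLm.inverse_apply_eq.2 ?_).symm
  have hLw : L (Λ w) = w := DFunLike.congr_fun hLΛ w
  simp [hm, hLw]

end InnerProduct

theorem exists_contDiffOn_two_reparametrization {E : Type*} [NormedAddCommGroup E]
    [InnerProductSpace ℝ E] [FiniteDimensional ℝ E] (hE : finrank ℝ E = 3)
    {D : Set (ℝ × ℝ)} (hD : IsOpen D) {f N : ℝ × ℝ → E}
    (hf : ContDiffOn ℝ 1 f D) (hN : ContDiffOn ℝ 1 N D)
    (hNx : ∀ q ∈ D, ⟪N q, pdx f q⟫_ℝ = 0) (hNy : ∀ q ∈ D, ⟪N q, pdy f q⟫_ℝ = 0)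
    {p : ℝ × ℝ} (hp : p ∈ D) (hreg : LinearIndependent ℝ ![pdx f p, pdy f p])
    (hNp : N p ≠ 0) :
    ∃ (U V : Set (ℝ × ℝ)) (S Sinv : ℝ × ℝ → ℝ × ℝ),
      IsOpen U ∧ p ∈ U ∧ U ⊆ D ∧ IsOpen V ∧
      Set.BijOn S V U ∧ ContDiffOn ℝ 1 S V ∧ ContDiffOn ℝ 1 Sinv U ∧
      (∀ q ∈ V, Sinv (S q) = q) ∧ (∀ q ∈ U, S (Sinv q) = q) ∧
      ContDiffOn ℝ 2 (f ∘ S) V ∧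
      (∀ q ∈ V, LinearIndependent ℝ ![pdx (f ∘ S) q, pdy (f ∘ S) q]) := by
  have hfd : ∀ q ∈ D, DifferentiableAt ℝ f q := fun q hq =>
    (hf.contDiffAt (hD.mem_nhds hq)).differentiableAt one_ne_zero
  have hperp : ∀ q ∈ D, ∀ w, ⟪N q, fderiv ℝ f q w⟫_ℝ = 0 := fun q hq w => by
    simp [fderiv_apply_eq_pdx_pdy (hfd q hq), inner_add_right, real_inner_smul_right,
      hNx q hq, hNy q hq]
  set L := innerSLProd (pdx f p) (pdy f p)
  set T : ℝ × ℝ → E →L[ℝ] (ℝ × ℝ) × ℝ := fun q => L.prod (innerSL ℝ (N q))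
  have hT : ContDiffOn ℝ 1 T D := by
    have hpair : ContDiffOn ℝ 1 (fun q => (L, innerSL ℝ (N q))) D :=
      contDiffOn_const.prodMk ((innerSL ℝ).contDiff.comp_contDiffOn hN)
    exact (ContinuousLinearMap.prodL ℝ).contDiff.comp_contDiffOn hpair
  obtain ⟨M, hM⟩ := isInvertible_innerSLProd_pdx_pdy_comp_fderiv (hfd p hp) hreg
  set W := D ∩ T ⁻¹' {e | e.IsInvertible}
  have hW : IsOpen W := hT.continuousOn.isOpen_inter_preimage hD ContinuousLinearEquiv.isOpen
  have hpW : p ∈ W := ⟨hp, ContinuousLinearMap.isInvertible_of_injective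
    (injective_innerSLProd_prod_innerSL hE hreg hNp (hNx p hp) (hNy p hp)) (by simp [hE])⟩
  have hLf : ContDiffOn ℝ 1 (fun q => L (f q)) D := L.contDiff.comp_contDiffOn hf
  obtain ⟨U, V, S, hU, hpU, hUW, hV, hSVU, hS, hLfS, hSLf⟩ :=
    ContDiffAt.exists_bijOn_localInverse (n := 1) (hLf.contDiffAt (hD.mem_nhds hp))
      (hM ▸ L.hasFDerivAt.comp p (hfd p hp).hasFDerivAt) one_ne_zero hW hpW
  have hSD : MapsTo S V D := fun v hv => (hUW (hSVU.mapsTo hv)).1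
  have hderiv : ∀ v ∈ V, HasFDerivAt (f ∘ S)
      ((T (S v)).inverse.comp (ContinuousLinearMap.inl ℝ (ℝ × ℝ) ℝ)) v := by
    intro v hv
    have hfS := (hfd _ (hSD hv)).hasFDerivAt.comp v
      ((hS.contDiffAt (hV.mem_nhds hv)).differentiableAt one_ne_zero).hasFDerivAt
    rwa [hfS.eq_inverse_prod_innerSL_comp_inl (eventually_of_mem (hV.mem_nhds hv) hLfS)
      (fun w => hperp _ (hSD hv) _) (hUW (hSVU.mapsTo hv)).2] at hfS
  have hderivC1 : ContDiffOn ℝ 1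
      (fun v => (T (S v)).inverse.comp (ContinuousLinearMap.inl ℝ (ℝ × ℝ) ℝ)) V := by
    refine ContDiffOn.clm_comp (fun v hv => ?_) contDiffOn_const
    exact ((hUW (hSVU.mapsTo hv)).2.contDiffAt_map_inverse).comp_contDiffWithinAt v
      (hT.comp hS hSD v hv)
  refine ⟨U, V, S, fun q => L (f q), hU, hpU, fun q hq => (hUW hq).1, hV, hSVU, hS,
    hLf.mono fun q hq => (hUW hq).1, hLfS, hSLf, ?_, fun v hv => ?_⟩
  · exact (contDiffOn_succ_iff_hasFDerivWithinAt_of_uniqueDiffOn (n := 1) hV.uniqueDiffOn).2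
      ⟨by simp, _, hderivC1, fun v hv => (hderiv v hv).hasFDerivWithinAt⟩
  · rw [linearIndependent_pdx_pdy_iff_injective_fderiv (hderiv v hv).differentiableAt,
      (hderiv v hv).fderiv]
    exact (hUW (hSVU.mapsTo hv)).2.inverse.injective.comp (Prod.mk_left_injective 0)

theorem inner_cross3_self_left (a b : E3) : ⟪a, cross3 a b⟫_ℝ = 0 := by
  simp only [cross3, WithLp.equiv_symm_apply, PiLp.inner_apply, RCLike.inner_apply,
    ringHom_apply, Fin.sum_univ_three, Matrix.cons_val_zero, Matrix.cons_val_one, Matrix.cons_val]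
  ring

theorem cross3_zero_left (b : E3) : cross3 0 b = 0 := by
  ext i
  fin_cases i <;> simp [cross3]

theorem stmt_13_general (D : Set (ℝ × ℝ)) (hD : IsOpen D)
    (f N : ℝ × ℝ → E3)
    (hf : C1M D f)
    (hreg : ∀ p ∈ D, LinearIndependent ℝ ![pdx f p, pdy f p])
    (hN : C1M D N)
    (hfxN : ∀ p ∈ D, pdx f p = cross3 (N p) (pdx N p))
    (hfyN : ∀ p ∈ D, pdy f p = -cross3 (N p) (pdy N p)) :
    ∀ p ∈ D, ∃ (U V : Set (ℝ × ℝ)) (S Sinv : ℝ × ℝ → ℝ × ℝ),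
      IsOpen U ∧ p ∈ U ∧ U ⊆ D ∧ IsOpen V ∧
      Set.BijOn S V U ∧ ContDiffOn ℝ 1 S V ∧ ContDiffOn ℝ 1 Sinv U ∧
      (∀ q ∈ V, Sinv (S q) = q) ∧ (∀ q ∈ U, S (Sinv q) = q) ∧
      ContDiffOn ℝ 2 (f ∘ S) V ∧
      (∀ q ∈ V, LinearIndependent ℝ ![pdx (f ∘ S) q, pdy (f ∘ S) q]) := by
  intro p hp
  have hNx : ∀ q ∈ D, ⟪N q, pdx f q⟫_ℝ = 0 := fun q hq => by
    rw [hfxN q hq, inner_cross3_self_left]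
  have hNy : ∀ q ∈ D, ⟪N q, pdy f q⟫_ℝ = 0 := fun q hq => by
    rw [hfyN q hq, inner_neg_right, inner_cross3_self_left, neg_zero]
  have hNp : N p ≠ 0 := fun hN0 => (hreg p hp).ne_zero 0 <| by
    simp [hfxN p hp, hN0, cross3_zero_left]
  exact exists_contDiffOn_two_reparametrization finrank_euclideanSpace_fin hD hf.1 hN.1 hNx hNy hp
    (hreg p hp) hNp

/-- Local graph-coordinate regularization: a regular C^{1M} immersion in asymptotic
Chebyshev coordinates with `K = −1` is, locally around every point, a C¹
reparametrization of a C² regular immersion. -/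
theorem stmt_13 (D : Set (ℝ × ℝ)) (hD : IsOpen D)
    (f N : ℝ × ℝ → E3) (θ : ℝ × ℝ → ℝ)
    (hf : C1M D f)
    (hreg : ∀ p ∈ D, LinearIndependent ℝ ![pdx f p, pdy f p])
    (hE : ∀ p ∈ D, ‖pdx f p‖ = 1) (hG : ∀ p ∈ D, ‖pdy f p‖ = 1)
    (hθc : ContinuousOn θ D) (hθr : ∀ p ∈ D, θ p ∈ Set.Ioo 0 π)
    (hcos : ∀ p ∈ D, Real.cos (θ p) = dot (pdx f p) (pdy f p))
    (hNdef : ∀ p ∈ D, N p = (Real.sin (θ p))⁻¹ • cross3 (pdx f p) (pdy f p))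
    (hN : C1M D N)
    (hNxy : ∀ p ∈ D, pdy (pdx N) p = Real.cos (θ p) • N p ∧
      pdx (pdy N) p = Real.cos (θ p) • N p)
    (hfxN : ∀ p ∈ D, pdx f p = cross3 (N p) (pdx N p))
    (hfyN : ∀ p ∈ D, pdy f p = -cross3 (N p) (pdy N p)) :
    ∀ p ∈ D, ∃ (U V : Set (ℝ × ℝ)) (S Sinv : ℝ × ℝ → ℝ × ℝ),
      IsOpen U ∧ p ∈ U ∧ U ⊆ D ∧ IsOpen V ∧
      Set.BijOn S V U ∧ ContDiffOn ℝ 1 S V ∧ ContDiffOn ℝ 1 Sinv U ∧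
      (∀ q ∈ V, Sinv (S q) = q) ∧ (∀ q ∈ U, S (Sinv q) = q) ∧
      ContDiffOn ℝ 2 (f ∘ S) V ∧
      (∀ q ∈ V, LinearIndependent ℝ ![pdx (f ∘ S) q, pdy (f ∘ S) q]) :=
  stmt_13_general D hD f N hf hreg hN hfxN hfyN
end
end
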